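/- arXiv:1701.04223 — 2 statements merged into one kernel-verified Lean document; each statement's English description precedes it below -/
import Mathlib

section
/- Let T = (X₁, X₂, X₃; f₁, f₂, f₃) and T' = (Y₁, Y₂, Y₃; g₁, g₂, g₃) be triangles of the idempotent completion Karoubi C belonging to the class Θ̃, and let a : X₁ → Y₁ and b : X₂ → Y₂ be morphisms with b ∘ f₁ = g₁ ∘ a. Then there exists c : X₃ → Y₃ such that (a, b, c) is a morphism of triangles (i.e. c ∘ f₂ = g₂ ∘ b and a⟦1⟧ ∘ f₃ = g₃ ∘ c). -/
open CategoryTheory CategoryTheory.Limits CategoryTheory.Pretriangulated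
  CategoryTheory.Idempotents ZeroObject

variable (C : Type*) [Category C] [Preadditive C] [HasZeroObject C] [HasFiniteBiproducts C]
  [HasShift C ℤ] [∀ n : ℤ, (shiftFunctor C n).Additive] [Pretriangulated C]

/-- The shift on the idempotent completion `Karoubi C` induced by the shift on `C`:
`(A, e)⟦n⟧ = (A⟦n⟧, e⟦n⟧)`. -/
noncomputable instance karoubiHasShift : HasShift (Karoubi C) ℤ :=
  HasShift.induced (toKaroubi C) ℤ
    (fun n => (functorExtension₂ C C).obj (shiftFunctor C n))
    (fun n => (functorExtension₂CompWhiskeringLeftToKaroubiIso C C).app (shiftFunctor C n))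

/-- The functor `toKaroubi C` commutes with the shifts. -/
noncomputable instance toKaroubiCommShift : (toKaroubi C).CommShift ℤ :=
  Functor.CommShift.ofInduced (toKaroubi C) ℤ
    (fun n => (functorExtension₂ C C).obj (shiftFunctor C n))
    (fun n => (functorExtension₂CompWhiskeringLeftToKaroubiIso C C).app (shiftFunctor C n))

noncomputable instance karoubiShiftAdditive (n : ℤ) :
    (shiftFunctor (Karoubi C) n).Additive := by
  change ((functorExtension₂ C C).obj (shiftFunctor C n)).Additive
  constructor
  intro X Y f g
  ext
  simp <;> rfl

noncomputable instance : HasBinaryBiproducts (Karoubi C) :=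
  hasBinaryBiproducts_of_finite_biproducts _

variable {C}

/-- The direct sum of two triangles: the triangle on the biproducts of the corresponding
objects, with the componentwise maps. -/
noncomputable def triangleSum {D : Type*} [Category D] [Preadditive D] [HasBinaryBiproducts D]
    [HasShift D ℤ] (T T' : Triangle D) : Triangle D :=
  Triangle.mk (biprod.map T.mor₁ T'.mor₁) (biprod.map T.mor₂ T'.mor₂)
    (biprod.desc (T.mor₃ ≫ (biprod.inl : T.obj₁ ⟶ T.obj₁ ⊞ T'.obj₁)⟦(1:ℤ)⟧')
      (T'.mor₃ ≫ (biprod.inr : T'.obj₁ ⟶ T.obj₁ ⊞ T'.obj₁)⟦(1:ℤ)⟧'))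

variable (C)

/-- The class `Θ̃` of triangles of `Karoubi C`: a triangle `T` belongs to `Θ̃` if there is a
triangle `T'` of `Karoubi C` such that `T ⊕ T'` is isomorphic to the image under
`(toKaroubi C).mapTriangle` of a distinguished triangle of `C`. -/
noncomputable def thetaTilde : Set (Triangle (Karoubi C)) :=
  {T | ∃ (T' : Triangle (Karoubi C)) (S : Triangle C),
    (S ∈ distTriang C) ∧ Nonempty (triangleSum T T' ≅ (toKaroubi C).mapTriangle.obj S)}

/-!
A triangle in `Θ̃` is a retract of the image of a distinguished triangle of `C`, via the
inclusion into and projection from the direct sum, which are morphisms of triangles.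
Completing commutative squares to morphisms of triangles passes to retracts, so it suffices
to complete squares between images of distinguished triangles of `C`; as `toKaroubi C` is
fully faithful, such a square comes from a square in `C`, which TR3 completes.
-/

section CompletesSquares

variable {D : Type*} [Category D] [HasShift D ℤ]

def CompletesSquares (U U' : Triangle D) : Prop :=
  ∀ (a : U.obj₁ ⟶ U'.obj₁) (b : U.obj₂ ⟶ U'.obj₂), U.mor₁ ≫ b = a ≫ U'.mor₁ →
    ∃ φ : U ⟶ U', φ.hom₁ = a ∧ φ.hom₂ = b

lemma CompletesSquares.of_retract {T T' U U' : Triangle D} (h : CompletesSquares U U')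
    (ρ : Retract T U) (ρ' : Retract T' U') : CompletesSquares T T' := by
  intro a b comm
  obtain ⟨φ, hφ₁, hφ₂⟩ := h (ρ.r.hom₁ ≫ a ≫ ρ'.i.hom₁) (ρ.r.hom₂ ≫ b ≫ ρ'.i.hom₂) (by
    rw [reassoc_of% ρ.r.comm₁, reassoc_of% comm, ρ'.i.comm₁, Category.assoc, Category.assoc])
  refine ⟨ρ.i ≫ φ ≫ ρ'.r, ?_, ?_⟩
  · simp [hφ₁, ← comp_hom₁_assoc, ← comp_hom₁]
  · simp [hφ₂, ← comp_hom₂_assoc, ← comp_hom₂]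

lemma CompletesSquares.map {E : Type*} [Category E] [HasShift E ℤ]
    (F : D ⥤ E) [F.CommShift ℤ] [F.Full] [F.Faithful] {S S' : Triangle D}
    (h : CompletesSquares S S') :
    CompletesSquares (F.mapTriangle.obj S) (F.mapTriangle.obj S') := by
  intro a b comm
  obtain ⟨φ, hφ₁, hφ₂⟩ := h (F.preimage a) (F.preimage b) (F.map_injective (by
    rw [F.map_comp, F.map_comp, F.map_preimage a, F.map_preimage b]; exact comm))
  exact ⟨F.mapTriangle.map φ, (congrArg F.map hφ₁).trans (F.map_preimage a),
    (congrArg F.map hφ₂).trans (F.map_preimage b)⟩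

end CompletesSquares

lemma completesSquares_of_distinguished {A : Type*} [Category A] [Preadditive A]
    [HasZeroObject A] [HasShift A ℤ] [∀ n : ℤ, (shiftFunctor A n).Additive] [Pretriangulated A]
    {S S' : Triangle A} (hS : S ∈ distTriang A) (hS' : S' ∈ distTriang A) :
    CompletesSquares S S' := by
  intro a b comm
  obtain ⟨c, hc₂, hc₃⟩ := complete_distinguished_triangle_morphism S S' hS hS' a b comm
  exact ⟨Triangle.homMk S S' a b c comm hc₂ hc₃, rfl, rfl⟩

noncomputable def triangleSumRetract {D : Type*} [Category D] [Preadditive D]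
    [HasBinaryBiproducts D] [HasShift D ℤ] [(shiftFunctor D (1 : ℤ)).PreservesZeroMorphisms]
    (T T₂ : Triangle D) : Retract T (triangleSum T T₂) where
  i := Triangle.homMk _ _ biprod.inl biprod.inl biprod.inl (biprod.inl_map _ _).symm
    (biprod.inl_map _ _).symm (biprod.inl_desc _ _).symm
  r := Triangle.homMk _ _ biprod.fst biprod.fst biprod.fst (biprod.map_fst _ _)
    (biprod.map_fst _ _)
    (show biprod.desc _ _ ≫ (biprod.fst : T.obj₁ ⊞ T₂.obj₁ ⟶ _)⟦(1 : ℤ)⟧' = biprod.fst ≫ T.mor₃ by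
      ext <;> simp [← Functor.map_comp])
  retract := by ext <;> exact biprod.inl_fst

lemma completesSquares_of_mem_thetaTilde {T T' : Triangle (Karoubi C)} (hT : T ∈ thetaTilde C)
    (hT' : T' ∈ thetaTilde C) : CompletesSquares T T' := by
  obtain ⟨T₂, S, hS, ⟨e⟩⟩ := hT
  obtain ⟨T₂', S', hS', ⟨e'⟩⟩ := hT'
  exact ((completesSquares_of_distinguished hS hS').map (toKaroubi C)).of_retract
    ((triangleSumRetract T T₂).trans (Retract.ofIso e))
    ((triangleSumRetract T' T₂').trans (Retract.ofIso e'))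

/-- Given triangles `T, T'` of `Karoubi C` in the class `Θ̃` and morphisms `a, b` making the
first square commute, there is a morphism `c` completing `(a, b)` to a morphism of
triangles. -/
theorem stmt12 (T T' : Triangle (Karoubi C)) (hT : T ∈ thetaTilde C) (hT' : T' ∈ thetaTilde C)
    (a : T.obj₁ ⟶ T'.obj₁) (b : T.obj₂ ⟶ T'.obj₂) (comm : T.mor₁ ≫ b = a ≫ T'.mor₁) :
    ∃ c : T.obj₃ ⟶ T'.obj₃,
      T.mor₂ ≫ c = b ≫ T'.mor₂ ∧ T.mor₃ ≫ a⟦(1:ℤ)⟧' = c ≫ T'.mor₃ := by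
  obtain ⟨φ, rfl, rfl⟩ := completesSquares_of_mem_thetaTilde C hT hT' a b comm
  exact ⟨φ.hom₃, φ.comm₂, φ.comm₃⟩
end

section
/- Uniqueness of the induced structure: let Θ' be a class of triangles of the idempotent completion Karoubi C which, with respect to the induced shift, satisfies the pretriangulated axioms TR1–TR3, is closed under direct summands of triangles, and contains (toKaroubi C).mapTriangle(T) for every distinguished triangle T of C. Then Θ' coincides with the class Θ̃. -/
/-!
Every object `(A, e)` of `Karoubi C` is a direct summand of `(A, 1)`, with complement
`(A, 1 - e)`. If `T` is distinguished for `Θ'`, add to it a `Θ'`-distinguished triangle on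
the zero map `(A₁, 1 - e₁) ⟶ (A₂, 1 - e₂)`: the sum is in `Θ'` (finite products of
distinguished triangles are distinguished) and its first morphism is a morphism `A₁ ⟶ A₂`
of `C`. Completing that morphism to a distinguished triangle `S` of `C`, the image of `S`
is in `Θ'`, and two `Θ'`-distinguished triangles on isomorphic morphisms are isomorphic,
so `T ∈ Θ̃`. Conversely, a member of `Θ̃` is a summand of a triangle isomorphic to an
image, hence lies in `Θ'`.
-/

open CategoryTheory CategoryTheory.Limits CategoryTheory.Pretriangulated
  CategoryTheory.Idempotents ZeroObject

variable (C : Type*) [Category C] [Preadditive C] [HasZeroObject C] [HasFiniteBiproducts C]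
  [HasShift C ℤ] [∀ n : ℤ, (shiftFunctor C n).Additive] [Pretriangulated C]

variable {C}

variable (C)

section BiprodIsoPiBool

variable {D : Type*} [Category D] [Preadditive D] [HasBinaryBiproducts D]

@[simps]
noncomputable def biprodIsoPiBool (X : Bool → D) [HasProduct X] :
    X true ⊞ X false ≅ ∏ᶜ X where
  hom := Pi.lift fun b => b.rec biprod.snd biprod.fst
  inv := biprod.lift (Pi.π X true) (Pi.π X false)
  hom_inv_id := by ext <;> simp
  inv_hom_id := by ext ⟨_ | _⟩ <;> simp

lemma biprod_map_comp_biprodIsoPiBool_hom {X Y : Bool → D} [HasProduct X] [HasProduct Y]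
    (f : ∀ b, X b ⟶ Y b) :
    biprod.map (f true) (f false) ≫ (biprodIsoPiBool Y).hom =
      (biprodIsoPiBool X).hom ≫ Limits.Pi.map f := by
  ext ⟨_ | _⟩ <;> simp

lemma biprod_desc_comp_map_biprodIsoPiBool_hom (F : D ⥤ D)
    {X Y : Bool → D} [HasProduct X] [HasProduct Y] (f : ∀ b, X b ⟶ F.obj (Y b))
    [HasProduct fun b => F.obj (Y b)] [IsIso (piComparison F Y)] [F.PreservesZeroMorphisms] :
    biprod.desc (f true ≫ F.map biprod.inl) (f false ≫ F.map biprod.inr) ≫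
        F.map (biprodIsoPiBool Y).hom =
      (biprodIsoPiBool X).hom ≫ Limits.Pi.map f ≫ inv (piComparison F Y) := by
  rw [← cancel_mono (piComparison F Y)]
  ext ⟨_ | _⟩ <;> simp [← F.map_comp]

end BiprodIsoPiBool

section SumDistinguished

variable {D : Type*} [Category D] [Preadditive D] [HasZeroObject D] [HasShift D ℤ]
  [∀ n : ℤ, (shiftFunctor D n).Additive] [Pretriangulated D]

noncomputable def triangleSumIsoProductTriangle (T : Bool → Triangle D) :
    triangleSum (T true) (T false) ≅ productTriangle T :=
  Triangle.isoMk _ _ (biprodIsoPiBool fun b => (T b).obj₁)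
    (biprodIsoPiBool fun b => (T b).obj₂) (biprodIsoPiBool fun b => (T b).obj₃)
    (biprod_map_comp_biprodIsoPiBool_hom fun b => (T b).mor₁)
    (biprod_map_comp_biprodIsoPiBool_hom fun b => (T b).mor₂)
    (biprod_desc_comp_map_biprodIsoPiBool_hom _ fun b => (T b).mor₃)

lemma triangleSum_distinguished {T T' : Triangle D}
    (hT : T ∈ distTriang D) (hT' : T' ∈ distTriang D) :
    triangleSum T T' ∈ distTriang D :=
  isomorphic_distinguished _
    (productTriangle_distinguished (fun b => bif b then T else T')
      (by rintro (_ | _) <;> assumption))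
    _ (triangleSumIsoProductTriangle fun b => bif b then T else T')

end SumDistinguished

section KaroubiStructure

variable [Pretriangulated (Karoubi C)]

lemma mem_thetaTilde_of_distinguished [(toKaroubi C).IsTriangulated] {T : Triangle (Karoubi C)}
    (hT : T ∈ distTriang (Karoubi C)) : T ∈ thetaTilde C := by
  obtain ⟨Z, g, h, hT₀⟩ :=
    distinguished_cocone_triangle (0 : T.obj₁.complement ⟶ T.obj₂.complement)
  let e₁ := T.obj₁.decomposition
  let e₂ := T.obj₂.decomposition
  let q : T.obj₁.X ⟶ T.obj₂.X :=
    (toKaroubi C).preimage (e₁.inv ≫ (triangleSum T (Triangle.mk 0 g h)).mor₁ ≫ e₂.hom)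
  obtain ⟨Z', g', h', hS⟩ := distinguished_cocone_triangle q
  refine ⟨_, _, hS, ⟨isoTriangleOfIso₁₂ _ _ (triangleSum_distinguished hT hT₀)
    ((toKaroubi C).map_distinguished _ hS) e₁ e₂ ?_⟩⟩
  change _ = e₁.hom ≫ (toKaroubi C).map q
  rw [Functor.map_preimage]
  exact (e₁.hom_inv_id_assoc _).symm

lemma distinguished_of_mem_thetaTilde [(toKaroubi C).IsTriangulated]
    (hsummand : ∀ T T' : Triangle (Karoubi C),
      triangleSum T T' ∈ distTriang (Karoubi C) → T ∈ distTriang (Karoubi C))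
    {T : Triangle (Karoubi C)} (hT : T ∈ thetaTilde C) : T ∈ distTriang (Karoubi C) := by
  obtain ⟨T', S, hS, ⟨e⟩⟩ := hT
  exact hsummand T T' (isomorphic_distinguished _ ((toKaroubi C).map_distinguished S hS) _ e)

end KaroubiStructure

/-- Uniqueness of the induced structure: if `Θ'` is a class of triangles of `Karoubi C`
satisfying the pretriangulated axioms (TR1)-(TR3) (i.e. it is the class of distinguished
triangles of a `Pretriangulated` structure on `Karoubi C`), is closed under direct summands
and contains the image under `(toKaroubi C).mapTriangle` of every distinguished triangle of
`C`, then `Θ'` coincides with `Θ̃`. -/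
theorem stmt15 (P : Pretriangulated (Karoubi C))
    (hsummand : ∀ T T' : Triangle (Karoubi C),
      triangleSum T T' ∈ P.distinguishedTriangles → T ∈ P.distinguishedTriangles)
    (himage : ∀ S : Triangle C, (S ∈ distTriang C) →
      (toKaroubi C).mapTriangle.obj S ∈ P.distinguishedTriangles) :
    P.distinguishedTriangles = thetaTilde C := by
  let := P
  have : (toKaroubi C).IsTriangulated := ⟨himage⟩
  ext T
  exact ⟨mem_thetaTilde_of_distinguished C, distinguished_of_mem_thetaTilde C hsummand⟩
end
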